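/- arXiv:2305.06682 — 2 statements merged into one kernel-verified Lean document; each statement's English description precedes it below -/
import Mathlib

section
/- Let −A*y ∈ ∂J(x) and −A*ȳ ∈ ∂J(x̄) with Ax̄ = f. Then D^{−A*ȳ}(x, x̄) = D_δ(ȳ) − D_δ(y) − ⟨Ax − f^δ, y − ȳ⟩, where D_δ(y) = J*(−A*y) + ⟨f^δ, y⟩. -/
open Set MeasureTheory

noncomputable section

notation "⟪" x ", " y "⟫" => @inner ℝ _ _ x y

/-- `u` is a subgradient of the convex function `J` at `x`. -/
def HasSubgrad {p : ℕ} (J : EuclideanSpace ℝ (Fin p) → ℝ) (u x : EuclideanSpace ℝ (Fin p)) :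
    Prop :=
  ∀ z, J x + ⟪u, z - x⟫ ≤ J z

/-- Bregman divergence `D^u(x₁,x₂) = J(x₁) - J(x₂) - ⟨u, x₁ - x₂⟩` (for `u ∈ ∂J(x₂)`). -/
def Breg {p : ℕ} (J : EuclideanSpace ℝ (Fin p) → ℝ) (u x₁ x₂ : EuclideanSpace ℝ (Fin p)) : ℝ :=
  J x₁ - J x₂ - ⟪u, x₁ - x₂⟫

/-- Fenchel conjugate `J*(u) = sup_z ⟨u,z⟩ - J(z)` (real-valued; correct whenever the
supremum is finite, e.g. when `u` lies in the range of `∂J`). -/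
def fenchelConj {p : ℕ} (J : EuclideanSpace ℝ (Fin p) → ℝ) (u : EuclideanSpace ℝ (Fin p)) : ℝ :=
  sSup (Set.range fun z => ⟪u, z⟫ - J z)

/-- The inexact dual function `D_δ(y) = J*(-A*y) + ⟨f^δ, y⟩`. -/
def dualFun {p d : ℕ} (J : EuclideanSpace ℝ (Fin p) → ℝ)
    (A : EuclideanSpace ℝ (Fin p) →L[ℝ] EuclideanSpace ℝ (Fin d))
    (fδ y : EuclideanSpace ℝ (Fin d)) : ℝ :=
  fenchelConj J (-(ContinuousLinearMap.adjoint A y)) + ⟪fδ, y⟫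

/-!
A subgradient `u ∈ ∂J(x)` attains the supremum defining `J*(u)`, so `J*(u) = ⟨u, x⟩ - J(x)`
(equality in Fenchel–Young). Evaluating both dual values this way turns the identity into
`⟨A*y, x⟩ = ⟨y, Ax⟩` and linear bookkeeping.
-/

theorem fenchelConj_eq_of_hasSubgrad {p : ℕ} {J : EuclideanSpace ℝ (Fin p) → ℝ}
    {u x : EuclideanSpace ℝ (Fin p)} (h : HasSubgrad J u x) :
    fenchelConj J u = ⟪u, x⟫ - J x := by
  have hmax : ∀ z, ⟪u, z⟫ - J z ≤ ⟪u, x⟫ - J x := fun z => by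
    have := h z
    rw [inner_sub_right] at this
    linarith
  have hbdd : BddAbove (range fun z => ⟪u, z⟫ - J z) := ⟨_, forall_mem_range.2 hmax⟩
  exact le_antisymm (csSup_le (range_nonempty _) (forall_mem_range.2 hmax))
    (le_csSup hbdd ⟨x, rfl⟩)

theorem dualFun_eq_of_hasSubgrad {p d : ℕ} {J : EuclideanSpace ℝ (Fin p) → ℝ}
    {A : EuclideanSpace ℝ (Fin p) →L[ℝ] EuclideanSpace ℝ (Fin d)}
    {x : EuclideanSpace ℝ (Fin p)} {y : EuclideanSpace ℝ (Fin d)}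
    (h : HasSubgrad J (-(ContinuousLinearMap.adjoint A y)) x) (fδ : EuclideanSpace ℝ (Fin d)) :
    dualFun J A fδ y = -⟪y, A x⟫ - J x + ⟪fδ, y⟫ := by
  rw [dualFun, fenchelConj_eq_of_hasSubgrad h, inner_neg_left,
    ContinuousLinearMap.adjoint_inner_left]

theorem bregman_eq_dual_gap'_general {p d : ℕ}
    (A : EuclideanSpace ℝ (Fin p) →L[ℝ] EuclideanSpace ℝ (Fin d))
    (J : EuclideanSpace ℝ (Fin p) → ℝ) (fδ : EuclideanSpace ℝ (Fin d))
    (x xb : EuclideanSpace ℝ (Fin p)) (y yb : EuclideanSpace ℝ (Fin d))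
    (hx : HasSubgrad J (-(ContinuousLinearMap.adjoint A y)) x)
    (hxb : HasSubgrad J (-(ContinuousLinearMap.adjoint A yb)) xb) :
    Breg J (-(ContinuousLinearMap.adjoint A yb)) x xb =
      dualFun J A fδ yb - dualFun J A fδ y - ⟪A x - fδ, y - yb⟫ := by
  rw [dualFun_eq_of_hasSubgrad hx, dualFun_eq_of_hasSubgrad hxb, Breg, inner_neg_left,
    ContinuousLinearMap.adjoint_inner_left]
  simp only [map_sub, inner_sub_left, inner_sub_right]
  rw [real_inner_comm (A x) y, real_inner_comm (A x) yb]
  ring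

/-- For `-A*y ∈ ∂J(x)` and a primal-dual solution `(x̄, ȳ)` (with `Ax̄ = f`), the Bregman
divergence `D^{-A*ȳ}(x, x̄)` equals `D_δ(ȳ) - D_δ(y) - ⟨Ax - f^δ, y - ȳ⟩`. -/
theorem bregman_eq_dual_gap' {p d : ℕ}
    (A : EuclideanSpace ℝ (Fin p) →L[ℝ] EuclideanSpace ℝ (Fin d))
    (J : EuclideanSpace ℝ (Fin p) → ℝ) (f fδ : EuclideanSpace ℝ (Fin d))
    (x xb : EuclideanSpace ℝ (Fin p)) (y yb : EuclideanSpace ℝ (Fin d))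
    (hx : HasSubgrad J (-(ContinuousLinearMap.adjoint A y)) x)
    (hxb : HasSubgrad J (-(ContinuousLinearMap.adjoint A yb)) xb)
    (hfeas : A xb = f) :
    Breg J (-(ContinuousLinearMap.adjoint A yb)) x xb =
      dualFun J A fδ yb - dualFun J A fδ y - ⟪A x - fδ, y - yb⟫ :=
  bregman_eq_dual_gap'_general A J fδ x xb y yb hx hxb
end
end

section
/- Let u(s) minimize J(u) + (s/2)‖Au − f^δ‖² and v(s) = Au(s) − f^δ, with ‖f^δ − f‖ ≤ δ and primal-dual solution (x̄, ȳ). Then for all s > 0: D^{−A*ȳ}(u(s), x̄) + D^{−sA*v(s)}(x̄, u(s)) ≤ (1/(4s))(‖ȳ‖ + sδ)². -/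
/-! With `e = f^δ - f` and `r = A(u(s) - x̄) = v(s) + e`, the sum of the two Bregman divergences
is the symmetric one, `⟨ȳ - s v(s), r⟩ = ⟨(ȳ + s e) - s r, r⟩`. Completing the square bounds
`⟨c - s r, r⟩` by `‖c‖² / (4s)`, and `‖ȳ + s e‖ ≤ ‖ȳ‖ + sδ`. -/

open Set MeasureTheory

noncomputable section

theorem breg_add_breg_swap {p : ℕ} (J : EuclideanSpace ℝ (Fin p) → ℝ)
    (u w x₁ x₂ : EuclideanSpace ℝ (Fin p)) :
    Breg J u x₁ x₂ + Breg J w x₂ x₁ = ⟪w - u, x₁ - x₂⟫ := by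
  rw [Breg, Breg, inner_sub_left, ← neg_sub x₁ x₂, inner_neg_right]
  ring

theorem mul_sub_mul_sq_le {a b s : ℝ} (hs : 0 < s) : a * b - s * b ^ 2 ≤ 1 / (4 * s) * a ^ 2 := by
  rw [div_mul_eq_mul_div, one_mul, le_div_iff₀ (by positivity)]
  nlinarith [sq_nonneg (a - 2 * s * b)]

theorem real_inner_sub_smul_le {E : Type*} [NormedAddCommGroup E] [InnerProductSpace ℝ E]
    (c z : E) {s : ℝ} (hs : 0 < s) : ⟪c - s • z, z⟫ ≤ 1 / (4 * s) * ‖c‖ ^ 2 := by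
  rw [inner_sub_left, real_inner_smul_left, real_inner_self_eq_norm_sq]
  exact (sub_le_sub_right (real_inner_le_norm c z) _).trans (mul_sub_mul_sq_le hs)

theorem tikhonov_bregman_bound_general {p d : ℕ}
    (A : EuclideanSpace ℝ (Fin p) →L[ℝ] EuclideanSpace ℝ (Fin d))
    (J : EuclideanSpace ℝ (Fin p) → ℝ)
    (f fδ : EuclideanSpace ℝ (Fin d)) (δ : ℝ) (hnoise : ‖fδ - f‖ ≤ δ)
    (xb : EuclideanSpace ℝ (Fin p)) (yb : EuclideanSpace ℝ (Fin d))
    (hfeas : A xb = f)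
    (u : ℝ → EuclideanSpace ℝ (Fin p)) (v : ℝ → EuclideanSpace ℝ (Fin d))
    (hv : ∀ s : ℝ, v s = A (u s) - fδ) :
    ∀ s > (0:ℝ),
      Breg J (-(ContinuousLinearMap.adjoint A yb)) (u s) xb +
          Breg J (-(s • ContinuousLinearMap.adjoint A (v s))) xb (u s) ≤
        1 / (4 * s) * (‖yb‖ + s * δ) ^ 2 := by
  intro s hs
  set e := fδ - f with he
  have hres : A (u s - xb) = v s + e := by
    rw [map_sub, hv, hfeas, he]
    abel
  have hdual : -(s • ContinuousLinearMap.adjoint A (v s)) - -ContinuousLinearMap.adjoint A yb =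
      ContinuousLinearMap.adjoint A ((yb + s • e) - s • (v s + e)) := by
    rw [map_sub, map_add, map_smul, map_smul, map_add, smul_add]
    abel
  have hnorm : ‖yb + s • e‖ ≤ ‖yb‖ + s * δ := by
    refine (norm_add_le _ _).trans ?_
    rw [norm_smul, Real.norm_of_nonneg hs.le]
    gcongr
  calc _ = ⟪(yb + s • e) - s • (v s + e), v s + e⟫ := by
        rw [breg_add_breg_swap, hdual, ContinuousLinearMap.adjoint_inner_left, hres]
    _ ≤ 1 / (4 * s) * ‖yb + s • e‖ ^ 2 := real_inner_sub_smul_le _ _ hs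
    _ ≤ 1 / (4 * s) * (‖yb‖ + s * δ) ^ 2 := by gcongr

/-- Bregman bound along the Tikhonov regularization path `u(s) ∈ argmin J + (s/2)‖A·-f^δ‖²`,
`v(s) = Au(s) - f^δ`:
`D^{-A*ȳ}(u(s), x̄) + D^{-sA*v(s)}(x̄, u(s)) ≤ (1/(4s))(‖ȳ‖ + sδ)²`. -/
theorem tikhonov_bregman_bound {p d : ℕ}
    (A : EuclideanSpace ℝ (Fin p) →L[ℝ] EuclideanSpace ℝ (Fin d))
    (J : EuclideanSpace ℝ (Fin p) → ℝ) (hJ : ConvexOn ℝ Set.univ J)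
    (f fδ : EuclideanSpace ℝ (Fin d)) (δ : ℝ) (hnoise : ‖fδ - f‖ ≤ δ)
    (xb : EuclideanSpace ℝ (Fin p)) (yb : EuclideanSpace ℝ (Fin d))
    (hsub : HasSubgrad J (-(ContinuousLinearMap.adjoint A yb)) xb) (hfeas : A xb = f)
    (u : ℝ → EuclideanSpace ℝ (Fin p)) (v : ℝ → EuclideanSpace ℝ (Fin d))
    (hv : ∀ s : ℝ, v s = A (u s) - fδ)
    (hmin : ∀ s > (0:ℝ), ∀ w, J (u s) + s / 2 * ‖A (u s) - fδ‖ ^ 2 ≤ J w + s / 2 * ‖A w - fδ‖ ^ 2)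
    (hopt : ∀ s > (0:ℝ), HasSubgrad J (-(s • ContinuousLinearMap.adjoint A (v s))) (u s)) :
    ∀ s > (0:ℝ),
      Breg J (-(ContinuousLinearMap.adjoint A yb)) (u s) xb +
          Breg J (-(s • ContinuousLinearMap.adjoint A (v s))) xb (u s) ≤
        1 / (4 * s) * (‖yb‖ + s * δ) ^ 2 :=
  tikhonov_bregman_bound_general A J f fδ δ hnoise xb yb hfeas u v hv
end
end
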